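/- In the bipartite hexagon model (n = 6, r = sqrt(sec(π/6))), the entangled state Φ_VI = [[−1/(2r²), −1/r⁴, 1/(3r³)], [−1/r⁴, 1/(2r²), −1/(2r)], [1/(3r³), −1/(2r), 1]] exhibits Hardy's nonlocality with Alice's measurements M₁ = (e₂, e₅), M₂ = (e₁, e₄) and Bob's measurements N₁ = (e₂, e₅), N₂ = (e₁, e₄): the zero conditions e₂ᵀ Φ_VI e₁ = 0, e₁ᵀ Φ_VI e₂ = 0, e₄ᵀ Φ_VI e₄ = 0 hold, and the success probability e₂ᵀ Φ_VI e₂ equals 1/8. -/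

import Mathlib

open Real Matrix

/-- `r = sqrt(sec(π/6))` for the hexagon model. -/
noncomputable def rH : ℝ := Real.sqrt (1 / Real.cos (Real.pi / 6))

/-- Extremal effects of the hexagon model:
`e_i = (1/2)·(r cos((2i−1)π/6), r sin((2i−1)π/6), 1)ᵀ`. -/
noncomputable def eH (i : ℕ) : Fin 3 → ℝ :=
  (1 / 2 : ℝ) •
    ![rH * Real.cos ((2 * (i : ℝ) - 1) * Real.pi / 6),
      rH * Real.sin ((2 * (i : ℝ) - 1) * Real.pi / 6), 1]

/-- Probability of local effects `E` (Alice) and `F` (Bob) on a bipartite state `Φ`: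
`P_Φ(E,F) = Eᵀ Φ F`. -/
noncomputable def prob (Φ : Matrix (Fin 3) (Fin 3) ℝ) (E F : Fin 3 → ℝ) : ℝ :=
  E ⬝ᵥ Φ.mulVec F

/-- The entangled state `Φ_VI` of the bipartite hexagon model. -/
noncomputable def PhiVI : Matrix (Fin 3) (Fin 3) ℝ :=
  !![-1 / (2 * rH ^ 2), -1 / rH ^ 4, 1 / (3 * rH ^ 3);
     -1 / rH ^ 4, 1 / (2 * rH ^ 2), -1 / (2 * rH);
     1 / (3 * rH ^ 3), -1 / (2 * rH), 1]

/-- `Φ_VI` exhibits Hardy's nonlocality with Alice's measurements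
`M₁ = (e₂, e₅)`, `M₂ = (e₁, e₄)` and Bob's measurements `N₁ = (e₂, e₅)`, `N₂ = (e₁, e₄)`;
the zero conditions hold and the success probability is `1/8`. -/
theorem hexagon_PhiVI_hardy :
    prob PhiVI (eH 2) (eH 1) = 0 ∧
    prob PhiVI (eH 1) (eH 2) = 0 ∧
    prob PhiVI (eH 4) (eH 4) = 0 ∧
    prob PhiVI (eH 2) (eH 2) = 1 / 8 := by
  have hS : Real.sqrt 3 ^ 2 = 3 := Real.sq_sqrt (by norm_num)
  have hs3pos : (0:ℝ) < Real.sqrt 3 := Real.sqrt_pos.mpr (by norm_num)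
  have hs3ne : Real.sqrt 3 ≠ 0 := ne_of_gt hs3pos
  have hr2 : rH ^ 2 = 2 / Real.sqrt 3 := by
    rw [rH, Real.sq_sqrt, Real.cos_pi_div_six]
    · rw [one_div_div]
    · rw [Real.cos_pi_div_six]; positivity
  have hH : rH ^ 2 * Real.sqrt 3 = 2 := by
    rw [hr2]; field_simp
  have hrpos : (0:ℝ) < rH := by
    rw [rH]; apply Real.sqrt_pos.mpr; rw [Real.cos_pi_div_six]; positivity
  have hrne : rH ≠ 0 := ne_of_gt hrpos
  have hPhi : PhiVI = !![-(Real.sqrt 3)/4, -3/4, rH/4;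
      -3/4, (Real.sqrt 3)/4, -(Real.sqrt 3 * rH)/4;
      rH/4, -(Real.sqrt 3 * rH)/4, 1] := by
    rw [PhiVI]
    ext i j
    fin_cases i <;> fin_cases j <;>
      simp only [Matrix.cons_val_zero, Matrix.cons_val_one, Matrix.head_cons,
        Matrix.cons_val_two, Matrix.tail_cons, Matrix.of_apply, Fin.reduceFinMk, Matrix.cons_val] <;>
      field_simp <;>
      nlinarith [hH, hS, sq_nonneg rH, sq_nonneg (Real.sqrt 3), mul_pos hrpos hs3pos]
  have ha1 : (2 * ((1:ℕ):ℝ) - 1) * Real.pi / 6 = Real.pi / 6 := by push_cast; ring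
  have ha2 : (2 * ((2:ℕ):ℝ) - 1) * Real.pi / 6 = Real.pi / 2 := by push_cast; ring
  have ha4 : (2 * ((4:ℕ):ℝ) - 1) * Real.pi / 6 = Real.pi + Real.pi / 6 := by push_cast; ring
  have hc4 : Real.cos (Real.pi + Real.pi / 6) = -(Real.sqrt 3 / 2) := by
    rw [Real.cos_add, Real.cos_pi, Real.sin_pi, Real.cos_pi_div_six]; ring
  have hsin4 : Real.sin (Real.pi + Real.pi / 6) = -(1 / 2) := by
    rw [Real.sin_add, Real.cos_pi, Real.sin_pi, Real.sin_pi_div_six]; ring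
  refine ⟨?_, ?_, ?_, ?_⟩ <;>
    simp only [prob, hPhi, eH, ha1, ha2, ha4, hc4, hsin4, Real.cos_pi_div_six,
      Real.sin_pi_div_six, Real.cos_pi_div_two, Real.sin_pi_div_two,
      mulVec, dotProduct, Fin.sum_univ_three, Pi.smul_apply, smul_eq_mul,
      Matrix.cons_val', Matrix.cons_val_zero, Matrix.cons_val_one, Matrix.head_cons,
      Matrix.empty_val', Matrix.cons_val_fin_one, Matrix.head_fin_const,
      Matrix.of_apply, Matrix.cons_val_two, Matrix.tail_cons]
  · linear_combination (-1/8 : ℝ) * hH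
  · linear_combination (-1/8 : ℝ) * hH
  · linear_combination ((-(Real.sqrt 3)^2 - 5)/64) * hH + (-1/32 : ℝ) * hS
  · linear_combination (-1/16 : ℝ) * hH
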